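/- Let Γ be a connected k-regular graph with d+1 distinct eigenvalues and odd-girth at least 2d+1. Then the average excess (the average over all vertices u of the number k_d(u) of vertices at distance d from u) equals (n / (ã_d π_0²)) · tr A^{2d+1}, where ã_d = Σ_{i=0}^d λ_i and π_0 = ∏_{i=1}^d (k − λ_i); in particular ã_d ≠ 0. -/

import Mathlib

/-!
Let `f = ∏ i, (X - λᵢ)`, which annihilates `A`, and `p = f / (X - k)`. Since `A p(A) = k p(A)`,
connectivity and regularity force `p(A) = (π₀ / n) J` (Hoffman). As `p` has degree `d` and all
entries of `p(A)` are nonzero, the diameter is at most `d`, and at distance exactly `d` only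
leading terms survive: `(A^d)ᵤᵥ = π₀ / n`, and `f(A) = 0` gives `(A^(d+1))ᵤᵥ = ã_d π₀ / n`.
In `(A^(2d+1))ᵤᵤ = ∑ᵥ (A^d)ᵤᵥ (A^(d+1))ᵥᵤ` the terms with `dist u v < d` vanish, because one of the
two factors counts odd closed walks shorter than the odd girth. Finally a diameter at most `d`
forces an odd closed walk of length exactly `2d + 1`, so the trace is positive and `ã_d ≠ 0`.
-/

open SimpleGraph Matrix Finset Polynomial

namespace SimpleGraph.Walk

variable {V : Type*} {G : SimpleGraph V}

theorem exists_isPath_mod_two_or_isCycle_odd [DecidableEq V] {u v : V} (w : G.Walk u v) :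
    (∃ p : G.Walk u v, p.IsPath ∧ p.length ≤ w.length ∧ p.length % 2 = w.length % 2) ∨
      ∃ (x : V) (c : G.Walk x x), c.IsCycle ∧ Odd c.length ∧ c.length ≤ w.length := by
  induction w with
  | nil => exact .inl ⟨nil, .nil, le_rfl, rfl⟩
  | @cons u x v h w ih =>
    rcases ih with ⟨p, hp, hle, hpar⟩ | ⟨y, c, hc, hodd, hle⟩
    · by_cases hu : u ∈ p.support
      · have hsplit := congrArg length (p.take_spec hu)
        rw [length_append] at hsplit
        have hq := hp.takeUntil hu
        rcases Nat.even_or_odd (p.takeUntil u hu).length with heven | hodd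
        · -- closing the even path from `x` back to `u` with the edge `h` gives an odd cycle
          refine .inr ⟨u, cons h (p.takeUntil u hu), ?_, ?_, ?_⟩
          · refine (cons_isCycle_iff _ h).2 ⟨hq, fun he => ?_⟩
            have := hq.length_eq_one_of_mem_edges (Sym2.eq_swap ▸ he)
            rw [this] at heven
            exact Nat.not_even_one heven
          · simpa [Nat.odd_add_one] using heven
          · simp only [length_cons]; omega
        · refine .inl ⟨p.dropUntil u hu, hp.dropUntil hu, ?_, ?_⟩
          · simp only [length_cons]; omega
          · rw [Nat.odd_iff] at hodd; simp only [length_cons]; omega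
      · exact .inl ⟨cons h p, hp.cons hu, by simpa using hle, by simp [Nat.add_mod, hpar]⟩
    · exact .inr ⟨y, c, hc, hodd, hle.trans (by simp)⟩

theorem exists_isCycle_odd_length_le [DecidableEq V] {u : V} (w : G.Walk u u)
    (hw : Odd w.length) :
    ∃ (x : V) (c : G.Walk x x), c.IsCycle ∧ Odd c.length ∧ c.length ≤ w.length := by
  refine w.exists_isPath_mod_two_or_isCycle_odd.resolve_left ?_
  rintro ⟨p, hp, -, hpar⟩
  rw [length_eq_zero_iff.2 (isPath_iff_nil.1 hp), eq_comm, ← Nat.even_iff] at hpar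
  exact Nat.not_even_iff_odd.2 hw hpar

end SimpleGraph.Walk

namespace SimpleGraph

variable {V : Type*} {G : SimpleGraph V}

theorem exists_odd_closed_walk_length_le_of_dist_le {D : ℕ} (hdist : ∀ u v, G.dist u v ≤ D)
    {u : V} (w : G.Walk u u) (hw : Odd w.length) :
    ∃ (x : V) (c : G.Walk x x), Odd c.length ∧ c.length ≤ 2 * D + 1 := by
  induction hL : w.length using Nat.strong_induction_on generalizing u with
  | _ L ih =>
    by_cases hshort : L ≤ 2 * D + 1
    · exact ⟨u, w, hw, hL ▸ hshort⟩
    -- cut `w` after `D + 1` steps and close both halves with a geodesic `r` to the cut vertex: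
    -- both closed walks are shorter than `w` and one of them is odd
    obtain ⟨r, hr⟩ := (w.take (D + 1)).reachable.exists_walk_length_eq_dist
    have hrD := hr ▸ hdist u (w.getVert (D + 1))
    have h₁ : ((w.take (D + 1)).append r.reverse).length = D + 1 + r.length := by
      simp only [Walk.length_append, Walk.length_reverse, Walk.take_length]; omega
    have h₂ : (r.append (w.drop (D + 1))).length = r.length + (L - (D + 1)) := by
      simp [Walk.drop_length, hL]
    rcases Nat.even_or_odd (D + 1 + r.length) with heven | hodd
    · refine ih _ (by omega) _ ?_ h₂
      rw [h₂, Nat.odd_iff]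
      rw [Nat.odd_iff] at hw
      rw [Nat.even_iff] at heven
      omega
    · exact ih _ (by omega) _ (h₁ ▸ hodd) h₁

end SimpleGraph

namespace Matrix

variable {n : Type*} [Fintype n] [DecidableEq n]

theorem IsHermitian.aeval_eq_zero_of_eval_eq_zero {A : Matrix n n ℝ} (hA : A.IsHermitian)
    {q : ℝ[X]} (hq : ∀ μ ∈ spectrum ℝ A, q.eval μ = 0) : aeval A q = 0 := by
  rw [← cfc_polynomial q A hA.isSelfAdjoint, cfc_congr (g := 0) hq, cfc_zero]

theorem IsHermitian.aeval {A : Matrix n n ℝ} (hA : A.IsHermitian) (q : ℝ[X]) :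
    (aeval A q).IsHermitian := by
  rw [← cfc_polynomial q A hA.isSelfAdjoint]
  exact cfc_predicate _ A

theorem aeval_mulVec_of_mulVec_eq_smul {R : Type*} [CommRing R] {A : Matrix n n R} {x : n → R}
    {μ : R} (hx : A *ᵥ x = μ • x) (q : R[X]) : aeval A q *ᵥ x = q.eval μ • x := by
  have h := Module.End.aeval_apply_of_mem_apply_eq_smul (p := q) (f := toLinAlgEquiv' A)
    (by rwa [toLinAlgEquiv'_apply])
  rwa [aeval_algEquiv, AlgHom.comp_apply, AlgEquiv.coe_toAlgHom, toLinAlgEquiv'_apply] at h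

end Matrix

namespace SimpleGraph

variable {V : Type*} [Fintype V] [DecidableEq V] {G : SimpleGraph V} [DecidableRel G.Adj]

theorem adjMatrix_pow_apply_eq_zero_of_forall_length_ne {R : Type*} [Semiring R] {m : ℕ}
    {u v : V} (h : ∀ w : G.Walk u v, w.length ≠ m) : (G.adjMatrix R ^ m) u v = 0 := by
  rw [adjMatrix_pow_apply_eq_card_walk, Fintype.card_eq_zero_iff.2 ⟨fun w => h w.1 w.2⟩,
    Nat.cast_zero]

theorem adjMatrix_pow_apply_eq_zero_of_lt_dist {R : Type*} [Semiring R] {m : ℕ} {u v : V}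
    (h : m < G.dist u v) : (G.adjMatrix R ^ m) u v = 0 :=
  adjMatrix_pow_apply_eq_zero_of_forall_length_ne fun w hw => (hw ▸ h).not_ge (G.dist_le w)

theorem adjMatrix_pow_apply_eq_zero_of_odd {R : Type*} [Semiring R] {N m : ℕ}
    (hN : ∀ (x : V) (c : G.Walk x x), Odd c.length → N ≤ c.length) {u v : V}
    (hodd : Odd (m + G.dist u v)) (hlt : m + G.dist u v < N) : (G.adjMatrix R ^ m) u v = 0 := by
  refine adjMatrix_pow_apply_eq_zero_of_forall_length_ne fun w hw => ?_
  obtain ⟨r, hr⟩ := w.reachable.symm.exists_walk_length_eq_dist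
  have := hN u (w.append r) (by rwa [Walk.length_append, hw, hr, dist_comm])
  rw [Walk.length_append, hw, hr, dist_comm] at this
  omega

theorem aeval_adjMatrix_apply {R : Type*} [CommSemiring R] {q : R[X]} {u v : V}
    (hq : q.natDegree ≤ G.dist u v + 1) :
    aeval (G.adjMatrix R) q u v = q.coeff (G.dist u v) * (G.adjMatrix R ^ G.dist u v) u v +
      q.coeff (G.dist u v + 1) * (G.adjMatrix R ^ (G.dist u v + 1)) u v := by
  rw [aeval_eq_sum_range' (Nat.lt_succ_of_le hq), Matrix.sum_apply, sum_range_succ,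
    sum_range_succ, sum_eq_zero fun j hj => ?_, zero_add]
  · simp only [Matrix.smul_apply, smul_eq_mul]
  · rw [Matrix.smul_apply, adjMatrix_pow_apply_eq_zero_of_lt_dist (mem_range.1 hj), smul_zero]

theorem dist_le_natDegree_of_aeval_adjMatrix_apply_ne_zero {R : Type*} [CommSemiring R]
    {q : R[X]} {u v : V} (h : aeval (G.adjMatrix R) q u v ≠ 0) : G.dist u v ≤ q.natDegree := by
  by_contra! hlt
  rw [aeval_adjMatrix_apply (by omega), coeff_eq_zero_of_natDegree_lt hlt,
    coeff_eq_zero_of_natDegree_lt (by omega), zero_mul, zero_mul, add_zero] at h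
  exact h rfl

theorem aeval_adjMatrix_apply_of_monic {R : Type*} [CommSemiring R] {p : R[X]} (hp : p.Monic)
    {u v : V} (hdeg : p.natDegree = G.dist u v) :
    aeval (G.adjMatrix R) p u v = (G.adjMatrix R ^ G.dist u v) u v := by
  rw [aeval_adjMatrix_apply hdeg.le.step, ← hdeg, hp.coeff_natDegree,
    coeff_eq_zero_of_natDegree_lt (Nat.lt_succ_self _), one_mul, zero_mul, add_zero]

theorem adjMatrix_pow_succ_apply_of_aeval_prod_eq_zero {R : Type*} [CommRing R] [Nontrivial R]
    {ι : Type*} {s : Finset ι} {lam : ι → R}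
    (hf : aeval (G.adjMatrix R) (∏ i ∈ s, (X - C (lam i))) = 0) {u v : V}
    (hs : #s = G.dist u v + 1) :
    (G.adjMatrix R ^ (G.dist u v + 1)) u v =
      (∑ i ∈ s, lam i) * (G.adjMatrix R ^ G.dist u v) u v := by
  have hlead : (∏ i ∈ s, (X - C (lam i))).coeff (G.dist u v + 1) = 1 := by
    rw [← hs, ← natDegree_finsetProd_X_sub_C_eq_card s lam]
    exact (monic_prod_X_sub_C lam s).coeff_natDegree
  have hnext : (∏ i ∈ s, (X - C (lam i))).coeff (G.dist u v) = -∑ i ∈ s, lam i := by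
    simpa [hs] using prod_X_sub_C_coeff_card_pred s lam (by omega)
  have h := congr_fun₂ hf u v
  rw [aeval_adjMatrix_apply (by simp [hs]), hlead, hnext, Matrix.zero_apply] at h
  linear_combination h

theorem trace_adjMatrix_pow_two_mul_add_one {R : Type*} [CommSemiring R] {d : ℕ}
    (hN : ∀ (x : V) (c : G.Walk x x), Odd c.length → 2 * d + 1 ≤ c.length) {a b : R}
    (ha : ∀ u v, G.dist u v = d → (G.adjMatrix R ^ d) u v = a)
    (hb : ∀ u v, G.dist u v = d → (G.adjMatrix R ^ (d + 1)) u v = b) :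
    trace (G.adjMatrix R ^ (2 * d + 1)) = (∑ u, (#{v | G.dist u v = d} : R)) * (a * b) := by
  have hterm (u v : V) : (G.adjMatrix R ^ d) u v * (G.adjMatrix R ^ (d + 1)) v u =
      if G.dist u v = d then a * b else 0 := by
    split_ifs with h
    · rw [ha u v h, hb v u (dist_comm.symm.trans h)]
    rcases lt_or_gt_of_ne h with hlt | hgt
    · rcases Nat.even_or_odd (d + G.dist u v) with heven | hodd
      · -- closed walks of the odd length `d + 1 + dist v u < 2 * d + 1` do not exist
        refine mul_eq_zero_of_right _ (adjMatrix_pow_apply_eq_zero_of_odd hN ?_ ?_)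
        · rw [dist_comm, add_right_comm]; exact heven.add_one
        · rw [dist_comm]; omega
      · exact mul_eq_zero_of_left (adjMatrix_pow_apply_eq_zero_of_odd hN hodd (by omega)) _
    · rw [adjMatrix_pow_apply_eq_zero_of_lt_dist hgt, zero_mul]
  rw [show 2 * d + 1 = d + (d + 1) by ring, pow_add, trace, sum_mul]
  simp only [diag_apply, mul_apply, hterm, sum_ite, sum_const_zero, add_zero, sum_const,
    nsmul_eq_mul]

theorem trace_adjMatrix_pow_length_pos {R : Type*} [Semiring R] [PartialOrder R]
    [IsStrictOrderedRing R] {u : V} (w : G.Walk u u) : 0 < trace (G.adjMatrix R ^ w.length) := by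
  refine sum_pos' (fun x _ => ?_) ⟨u, mem_univ u, ?_⟩ <;>
    rw [diag_apply, adjMatrix_pow_apply_eq_card_walk]
  · positivity
  · exact Nat.cast_pos.2 (Fintype.card_pos_iff.2 ⟨⟨w, rfl⟩⟩)

theorem IsRegularOfDegree.eq_of_adjMatrix_mulVec_eq_smul {k : ℕ} (hreg : G.IsRegularOfDegree k)
    (hconn : G.Connected) {x : V → ℝ} (hx : G.adjMatrix ℝ *ᵥ x = (k : ℝ) • x) (u v : V) :
    x u = x v := by
  refine (lapMatrix_mulVec_eq_zero_iff_forall_reachable G).1 ?_ u v (hconn u v)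
  ext w
  simp [lapMatrix, sub_mulVec, degMatrix_mulVec_apply, hx, hreg w]

/-- Hoffman: if `(X - k) * p` annihilates `A`, then `p(A) = (p(k) / n) J`. -/
theorem IsRegularOfDegree.aeval_adjMatrix_apply_eq {k : ℕ} (hreg : G.IsRegularOfDegree k)
    (hconn : G.Connected) {p : ℝ[X]} (hp : aeval (G.adjMatrix ℝ) ((X - C (k : ℝ)) * p) = 0)
    (u v : V) : aeval (G.adjMatrix ℝ) p u v = p.eval (k : ℝ) / Fintype.card V := by
  have hAP : G.adjMatrix ℝ * aeval (G.adjMatrix ℝ) p = (k : ℝ) • aeval (G.adjMatrix ℝ) p := by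
    rwa [map_mul, map_sub, aeval_X, aeval_C, Algebra.algebraMap_eq_smul_one, sub_mul, smul_mul,
      one_mul, sub_eq_zero] at hp
  set P := aeval (G.adjMatrix ℝ) p
  have hcol (w : V) (u v : V) : P u w = P v w :=
    hreg.eq_of_adjMatrix_mulVec_eq_smul hconn (x := fun v => P v w)
      (funext fun x => congr_fun₂ hAP x w) u v
  have hsymm (u v : V) : P u v = P v u :=
    (star_trivial _).symm.trans (((G.isHermitian_adjMatrix ℝ).aeval p).apply v u)
  have hrow : P *ᵥ (fun _ => 1) = p.eval (k : ℝ) • fun _ => 1 :=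
    aeval_mulVec_of_mulVec_eq_smul (by ext; simp [hreg _]) p
  have hsum := congr_fun hrow u
  simp only [mulVec, dotProduct, mul_one, Pi.smul_apply, smul_eq_mul] at hsum
  rw [← hsum, sum_congr rfl fun w _ => (hsymm u w).trans ((hcol u w v).trans (hsymm v u)),
    sum_const, card_univ, nsmul_eq_mul]
  have := hconn.nonempty
  field_simp

section SpectralData

variable {k d : ℕ} {lam : Fin (d + 1) → ℝ}

theorem IsRegularOfDegree.aeval_adjMatrix_prod_Ioi_apply (hreg : G.IsRegularOfDegree k)
    (hconn : G.Connected) (h0 : lam 0 = k)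
    (hf : aeval (G.adjMatrix ℝ) (∏ i, (X - C (lam i))) = 0) (u v : V) :
    aeval (G.adjMatrix ℝ) (∏ i ∈ Ioi 0, (X - C (lam i))) u v =
      (∏ i ∈ Ioi 0, ((k : ℝ) - lam i)) / Fintype.card V := by
  rw [hreg.aeval_adjMatrix_apply_eq hconn ?_ u v, eval_prod]
  · simp
  · rwa [← h0, Fin.prod_Ioi_zero, ← Fin.prod_univ_succ (f := fun i => X - C (lam i))]

theorem IsRegularOfDegree.dist_le (hreg : G.IsRegularOfDegree k) (hconn : G.Connected)
    (h0 : lam 0 = k) (hf : aeval (G.adjMatrix ℝ) (∏ i, (X - C (lam i))) = 0)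
    (hπ : ∏ i ∈ Ioi 0, ((k : ℝ) - lam i) ≠ 0) (u v : V) : G.dist u v ≤ d := by
  have := hconn.nonempty
  have h := dist_le_natDegree_of_aeval_adjMatrix_apply_ne_zero (u := u) (v := v)
    (q := ∏ i ∈ Ioi 0, (X - C (lam i)))
    (by rw [hreg.aeval_adjMatrix_prod_Ioi_apply hconn h0 hf]; positivity)
  simpa using h

theorem IsRegularOfDegree.trace_adjMatrix_pow_two_mul_add_one (hreg : G.IsRegularOfDegree k)
    (hconn : G.Connected) (h0 : lam 0 = k)
    (hf : aeval (G.adjMatrix ℝ) (∏ i, (X - C (lam i))) = 0)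
    (hN : ∀ (x : V) (c : G.Walk x x), Odd c.length → 2 * d + 1 ≤ c.length) :
    trace (G.adjMatrix ℝ ^ (2 * d + 1)) = (∑ u, (#{v | G.dist u v = d} : ℝ)) *
      ((∑ i, lam i) * (∏ i ∈ Ioi 0, ((k : ℝ) - lam i)) ^ 2 / (Fintype.card V : ℝ) ^ 2) := by
  have ha (u v : V) (huv : G.dist u v = d) : (G.adjMatrix ℝ ^ d) u v =
      (∏ i ∈ Ioi 0, ((k : ℝ) - lam i)) / Fintype.card V := by
    have h := aeval_adjMatrix_apply_of_monic (G := G) (u := u) (v := v)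
      (monic_prod_X_sub_C lam (Ioi 0)) (by simp [huv])
    rw [huv] at h
    rw [← h, hreg.aeval_adjMatrix_prod_Ioi_apply hconn h0 hf]
  have hb (u v : V) (huv : G.dist u v = d) : (G.adjMatrix ℝ ^ (d + 1)) u v =
      (∑ i, lam i) * ((∏ i ∈ Ioi 0, ((k : ℝ) - lam i)) / Fintype.card V) := by
    have h := adjMatrix_pow_succ_apply_of_aeval_prod_eq_zero hf (u := u) (v := v) (by simp [huv])
    rw [huv] at h
    rw [h, ha u v huv]
  rw [G.trace_adjMatrix_pow_two_mul_add_one hN ha hb]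
  ring

end SpectralData

end SimpleGraph

/-- In a connected `k`-regular graph on `n` vertices with `d+1` distinct
eigenvalues `k = λ₀ > ⋯ > λ_d` and finite odd-girth at least `2d+1`, the average
excess equals `(n / (ã_d π₀²)) · tr A^{2d+1}`; in particular `ã_d ≠ 0`. -/
theorem stmt_8 {V : Type*} [Fintype V] [DecidableEq V] (G : SimpleGraph V)
    [DecidableRel G.Adj] (k d : ℕ) (lam : Fin (d + 1) → ℝ)
    (hconn : G.Connected) (hreg : G.IsRegularOfDegree k)
    (hanti : StrictAnti lam) (h0 : lam 0 = (k : ℝ))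
    (hspec : spectrum ℝ (G.adjMatrix ℝ) = Set.range lam)
    (hoddcycle : ∃ (u : V) (w : G.Walk u u), w.IsCycle ∧ Odd w.length)
    (hog : ∀ (u : V) (w : G.Walk u u), w.IsCycle → Odd w.length → 2 * d + 1 ≤ w.length) :
    (∑ u : V, ((Finset.univ.filter (fun v => G.dist u v = d)).card : ℝ)) / (Fintype.card V : ℝ)
      = (Fintype.card V : ℝ) /
          ((∑ i : Fin (d + 1), lam i) *
            (∏ i ∈ Finset.Ioi (0 : Fin (d + 1)), ((k : ℝ) - lam i)) ^ 2) *
          Matrix.trace ((G.adjMatrix ℝ) ^ (2 * d + 1)) ∧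
      (∑ i : Fin (d + 1), lam i) ≠ 0 := by
  have hf : aeval (G.adjMatrix ℝ) (∏ i, (X - C (lam i))) = 0 :=
    (G.isHermitian_adjMatrix ℝ).aeval_eq_zero_of_eval_eq_zero fun μ hμ => by
      obtain ⟨i, rfl⟩ := hspec ▸ hμ
      simp [eval_prod, prod_eq_zero (mem_univ i)]
  have hπ : ∏ i ∈ Ioi 0, ((k : ℝ) - lam i) ≠ 0 := prod_ne_zero_iff.2 fun i hi =>
    sub_ne_zero.2 (h0 ▸ hanti.injective.ne (mem_Ioi.1 hi).ne)
  have hN (x : V) (c : G.Walk x x) (hc : Odd c.length) : 2 * d + 1 ≤ c.length :=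
    have ⟨y, c', hcyc, hodd, hle⟩ := c.exists_isCycle_odd_length_le hc
    (hog y c' hcyc hodd).trans hle
  have htrace := hreg.trace_adjMatrix_pow_two_mul_add_one hconn h0 hf hN
  -- the odd girth is exactly `2d + 1`, since the diameter is at most `d`
  obtain ⟨u, w, -, hw⟩ := hoddcycle
  obtain ⟨x, c, hc, hlen⟩ :=
    exists_odd_closed_walk_length_le_of_dist_le (hreg.dist_le hconn h0 hf hπ) w hw
  have hpos : 0 < trace (G.adjMatrix ℝ ^ (2 * d + 1)) :=
    le_antisymm hlen (hN x c hc) ▸ trace_adjMatrix_pow_length_pos c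
  have hã : ∑ i, lam i ≠ 0 := by
    rintro h
    rw [htrace, h] at hpos
    simp at hpos
  refine ⟨?_, hã⟩
  have := hconn.nonempty
  rw [htrace]
  field_simp
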